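/- If π is a 2d-cycle on I±, then the Hilbert space H = ℂ^{2d} ⊗ ℓ²(ℤ^d) is the orthogonal direct sum of the invariant subspaces H^τ_x over a suitable index set; consequently U_D(C_π) is a direct sum of finite-dimensional unitaries and hence has pure point spectrum for every choice of diagonal unitary D. -/

import Mathlib

noncomputable section
open scoped InnerProductSpace ENNReal

/-- Coin index set, modeling I_± = {±1,…,±d}: a direction in `Fin d` and a sign. -/
abbrev Coin (d : ℕ) := Fin d × Bool

/-- The lattice ℤ^d (with the sup norm from the Pi instance). -/
abbrev Site (d : ℕ) := Fin d → ℤ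

/-- The Hilbert space ℂ^{2d} ⊗ ℓ²(ℤ^d), modeled as ℓ² over Coin d × ℤ^d. -/
abbrev WalkH (d : ℕ) := lp (fun _ : Coin d × Site d => ℂ) 2

/-- The jump function r(τ) = sign(τ) e_{|τ|}. -/
def jump (d : ℕ) (τ : Coin d) : Site d := (if τ.2 then (1 : ℤ) else -1) • Pi.single τ.1 1

/-- The canonical basis vector |τ, x⟩. -/
def bv (d : ℕ) (τ : Coin d) (x : Site d) : WalkH d := lp.single 2 (τ, x) 1

/-- The permutation coin matrix C_π = Σ_τ |π(τ)⟩⟨τ|. -/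
def permCoin (d : ℕ) (π : Equiv.Perm (Coin d)) : Matrix (Coin d) (Coin d) ℂ :=
  fun τ σ => if τ = π σ then 1 else 0

/-- The cyclic subspace H^τ_x = span{|π^k(τ), x + Σ_{s=1}^k r(π^s(τ))⟩ : 0 ≤ k ≤ 2d−1}. -/
def cycSubspace (d : ℕ) (π : Equiv.Perm (Coin d)) (τ : Coin d) (x : Site d) :
    Submodule ℂ (WalkH d) :=
  Submodule.span ℂ
    { v | ∃ k < 2 * d,
        v = bv d ((π ^ k) τ) (x + ∑ s ∈ Finset.range k, jump d ((π ^ (s + 1)) τ)) }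

/-!
Since `π` is a single cycle through all `2d` coins and the jumps along one turn of the cycle sum
to zero, the path `e_k = |π^k τ₀, x + Σ_{s=1}^k r(π^s τ₀)⟩` closes up: `e_{2d} = e_0`. The
subspaces `H^{τ₀}_x`, `x ∈ ℤ^d`, therefore split the standard basis into mutually orthogonal
blocks of size `2d`, and on each block `D U` is a weighted cyclic shift `e_k ↦ a_k e_{k+1}` with
`|a_k| = 1`. Such a shift is diagonalised by a twisted discrete Fourier transform: with
`μ^{2d} = ∏ a_k` and `ω` a primitive `2d`-th root of unity, the vectors
`Σ_k (∏_{s<k} a_s) (μ ω^j)^{-k} e_k` are eigenvectors with eigenvalues `μ ω^j`, orthonormal by the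
orthogonality of the characters of `ℤ/2d`.
-/

open scoped ComplexConjugate
open Finset

theorem IsPrimitiveRoot.sum_range_pow_div_pow {K : Type*} [Field K] {ω : K} {n j j' : ℕ}
    (hω : IsPrimitiveRoot ω n) (hj : j < n) (hj' : j' < n) :
    ∑ k ∈ range n, (ω ^ j / ω ^ j') ^ k = if j = j' then (n : K) else 0 := by
  have hω₀ : ω ≠ 0 := hω.ne_zero (by omega)
  split_ifs with h
  · simp [h, div_self (pow_ne_zero _ hω₀)]
  · have hr : ω ^ j / ω ^ j' ≠ 1 := fun hr =>
      h (hω.pow_inj hj hj' (div_eq_one_iff_eq (pow_ne_zero _ hω₀) |>.mp hr))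
    have hrn : (ω ^ j / ω ^ j') ^ n = 1 := by
      rw [div_pow, ← pow_mul, ← pow_mul, mul_comm j, mul_comm j', pow_mul, pow_mul,
        hω.pow_eq_one, one_pow, one_pow, div_one]
    rw [geom_sum_eq hr, hrn, sub_self, zero_div]

theorem conj_twist_mul_twist {A μ μ' : ℂ} (hA : ‖A‖ = 1) (hμ : ‖μ‖ = 1) (k : ℕ) :
    conj (A * (μ ^ k)⁻¹) * (A * (μ' ^ k)⁻¹) = (μ / μ') ^ k := by
  have hAA : conj A * A = 1 := by rw [Complex.conj_mul', hA]; simp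
  have hμinv : conj (μ ^ k)⁻¹ = μ ^ k := by
    rw [← Complex.inv_eq_conj (by rw [norm_inv, norm_pow, hμ, one_pow, inv_one]), inv_inv]
  rw [map_mul, hμinv, div_pow, div_eq_mul_inv]
  linear_combination (μ ^ k * (μ' ^ k)⁻¹) * hAA

section WeightedShift

variable {E : Type*} [NormedAddCommGroup E] [InnerProductSpace ℂ E]

theorem map_sum_eq_smul_of_weighted_shift (T : E →ₗ[ℂ] E) (e : ℕ → E) (a β : ℕ → ℂ) (c : ℂ)
    (n : ℕ) (hT : ∀ k, T (e k) = a k • e (k + 1)) (hβ : ∀ k, β k * a k = c * β (k + 1))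
    (hwrap : β n • e n = β 0 • e 0) :
    T (∑ k ∈ range n, β k • e k) = c • ∑ k ∈ range n, β k • e k := by
  have hshift : T (∑ k ∈ range n, β k • e k) = c • ∑ k ∈ range n, β (k + 1) • e (k + 1) := by
    simp only [map_sum, map_smul, hT, smul_smul, hβ, smul_sum]
  rw [hshift]
  congr 1
  have h := sum_range_succ' (fun k => β k • e k) n
  rw [sum_range_succ, hwrap] at h
  exact (add_right_cancel h).symm

theorem orthonormal_twisted_sums {n : ℕ} {e : ℕ → E} (he : Orthonormal ℂ fun k : Fin n => e k)
    {ω μ : ℂ} (hω : IsPrimitiveRoot ω n) (hμ : ‖μ‖ = 1) {A : ℕ → ℂ} (hA : ∀ k, ‖A k‖ = 1) :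
    Orthonormal ℂ fun j : Fin n =>
      ((√n : ℝ) : ℂ)⁻¹ • ∑ k ∈ range n, (A k * ((μ * ω ^ (j : ℕ)) ^ k)⁻¹) • e k := by
  rw [orthonormal_iff_ite]
  intro j j'
  have hn : n ≠ 0 := j.pos.ne'
  have hμω : ∀ i : ℕ, ‖μ * ω ^ i‖ = 1 := fun i => by
    rw [norm_mul, norm_pow, hω.norm'_eq_one hn, hμ, one_pow, one_mul]
  have hμ₀ : μ ≠ 0 := norm_ne_zero_iff.mp (by rw [hμ]; exact one_ne_zero)
  have hscalar : conj (((√n : ℝ) : ℂ)⁻¹) * ((√n : ℝ) : ℂ)⁻¹ * n = 1 := by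
    rw [map_inv₀, Complex.conj_ofReal, ← mul_inv, ← Complex.ofReal_mul,
      Real.mul_self_sqrt n.cast_nonneg, Complex.ofReal_natCast,
      inv_mul_cancel₀ (Nat.cast_ne_zero.mpr hn)]
  rw [inner_smul_left, inner_smul_right, ← Fin.sum_univ_eq_sum_range, ← Fin.sum_univ_eq_sum_range,
    he.inner_sum, Fin.sum_univ_eq_sum_range (fun k => conj (A k * ((μ * ω ^ (j : ℕ)) ^ k)⁻¹) *
      (A k * ((μ * ω ^ (j' : ℕ)) ^ k)⁻¹))]
  simp only [conj_twist_mul_twist (hA _) (hμω _), mul_div_mul_left _ _ hμ₀]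
  rw [hω.sum_range_pow_div_pow j.isLt j'.isLt, ← mul_assoc]
  simp only [Fin.val_inj]
  split_ifs
  · exact hscalar
  · exact mul_zero _

theorem exists_orthonormal_eigenbasis_of_weighted_cyclic_shift (T : E →ₗ[ℂ] E) {n : ℕ}
    (hn : 0 < n) {e : ℕ → E} (he : Orthonormal ℂ fun k : Fin n => e k) (hwrap : e n = e 0)
    {a : ℕ → ℂ} (hT : ∀ k, T (e k) = a k • e (k + 1)) (ha : ∀ k, ‖a k‖ = 1) :
    ∃ f : Fin n → E, Orthonormal ℂ f ∧ (∀ j, ∃ c : ℂ, T (f j) = c • f j) ∧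
      Submodule.span ℂ (Set.range f) = Submodule.span ℂ (Set.range fun k : Fin n => e k) := by
  set A : ℕ → ℂ := fun k => ∏ s ∈ range k, a s
  have hA : ∀ k, ‖A k‖ = 1 := fun k => by simp [A, norm_prod, ha]
  have hA₀ : ∀ k, A k ≠ 0 := fun k => norm_ne_zero_iff.mp (by rw [hA]; exact one_ne_zero)
  obtain ⟨μ, hμ⟩ := IsAlgClosed.exists_pow_nat_eq (A n) hn
  have hμ₁ : ‖μ‖ = 1 := (pow_eq_one_iff_of_nonneg (norm_nonneg μ) hn.ne').mp <| by
    rw [← norm_pow, hμ, hA]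
  have hω := Complex.isPrimitiveRoot_exp n hn.ne'
  set ω := Complex.exp (2 * Real.pi * Complex.I / n)
  set c : Fin n → ℂ := fun j => μ * ω ^ (j : ℕ)
  have hc₀ : ∀ j, c j ≠ 0 := fun j => mul_ne_zero (by rintro rfl; simp at hμ₁)
    (pow_ne_zero _ (hω.ne_zero hn.ne'))
  have hcn : ∀ j, c j ^ n = A n := fun j => by
    rw [mul_pow, ← pow_mul, mul_comm (j : ℕ) n, pow_mul, hω.pow_eq_one, one_pow, mul_one, hμ]
  set f : Fin n → E := fun j => ((√n : ℝ) : ℂ)⁻¹ • ∑ k ∈ range n, (A k * (c j ^ k)⁻¹) • e k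
  have hf : Orthonormal ℂ f := orthonormal_twisted_sums he hω hμ₁ hA
  refine ⟨f, hf, fun j => ⟨c j, ?_⟩, ?_⟩
  · rw [map_smul, map_sum_eq_smul_of_weighted_shift T e a _ (c j) n hT, smul_comm]
    · intro k
      simp only [A, prod_range_succ, pow_succ]
      field_simp [hc₀ j]
    · rw [hwrap, hcn, mul_inv_cancel₀ (hA₀ n)]
      simp [A]
  · have hle :
        Submodule.span ℂ (Set.range f) ≤ Submodule.span ℂ (Set.range fun k : Fin n => e k) :=
      Submodule.span_le.mpr <| Set.range_subset_iff.mpr fun j =>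
        Submodule.smul_mem _ _ <| Submodule.sum_mem _ fun k hk =>
          Submodule.smul_mem _ _ <| Submodule.subset_span ⟨⟨k, mem_range.mp hk⟩, rfl⟩
    have := FiniteDimensional.span_of_finite ℂ (Set.finite_range fun k : Fin n => e k)
    refine Submodule.eq_of_le_of_finrank_eq hle ?_
    rw [finrank_span_eq_card hf.linearIndependent, finrank_span_eq_card he.linearIndependent]

end WeightedShift

theorem orthonormal_uncurry_of_pairwise_isOrtho {𝕜 F X ι : Type*} [RCLike 𝕜]
    [NormedAddCommGroup F] [InnerProductSpace 𝕜 F] {V : X → Submodule 𝕜 F}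
    (hV : Pairwise fun x x' => V x ⟂ V x') {f : X → ι → F} (hf : ∀ x, Orthonormal 𝕜 (f x))
    (hfV : ∀ x i, f x i ∈ V x) : Orthonormal 𝕜 (Function.uncurry f) := by
  classical
  rw [orthonormal_iff_ite]
  rintro ⟨x, i⟩ ⟨x', i'⟩
  by_cases hx : x = x'
  · subst hx
    simp [Function.uncurry, orthonormal_iff_ite.mp (hf x)]
  · rw [if_neg (fun h => hx (Prod.ext_iff.mp h).1)]
    exact (hV hx).inner_eq (hfV x i) (hfV x' i')

def IsFullCycle {α : Type*} [Fintype α] (π : Equiv.Perm α) : Prop :=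
  ∀ σ τ, ∃ k < Fintype.card α, (π ^ k) τ = σ

namespace IsFullCycle

variable {α : Type*} [Fintype α] {π : Equiv.Perm α}

theorem bijective_pow_apply (hπ : IsFullCycle π) (τ : α) :
    Function.Bijective fun k : Fin (Fintype.card α) => (π ^ (k : ℕ)) τ := by
  rw [Fintype.bijective_iff_surjective_and_card]
  refine ⟨fun σ => ?_, Fintype.card_fin _⟩
  obtain ⟨k, hk, rfl⟩ := hπ σ τ
  exact ⟨⟨k, hk⟩, rfl⟩

theorem pow_apply_inj (hπ : IsFullCycle π) (τ : α) {k m : ℕ} (hk : k < Fintype.card α)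
    (hm : m < Fintype.card α) : (π ^ k) τ = (π ^ m) τ ↔ k = m := by
  refine ⟨fun h => ?_, fun h => h ▸ rfl⟩
  simpa using (hπ.bijective_pow_apply τ).injective (a₁ := ⟨k, hk⟩) (a₂ := ⟨m, hm⟩) h

theorem pow_card_apply (hπ : IsFullCycle π) (τ : α) : (π ^ Fintype.card α) τ = τ := by
  obtain ⟨m, hm, hτ⟩ := hπ τ (π τ)
  rw [← Equiv.Perm.mul_apply, ← pow_succ] at hτ
  have hcard : m + 1 = Fintype.card α := by
    by_contra hne
    have h0 : (π ^ (m + 1)) τ = (π ^ 0) τ := by simpa using hτ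
    exact m.succ_ne_zero ((hπ.pow_apply_inj τ (by omega) (by omega)).mp h0)
  rwa [← hcard]

theorem sum_range_pow_apply {M : Type*} [AddCommMonoid M] (hπ : IsFullCycle π) (f : α → M)
    (τ : α) : ∑ k ∈ range (Fintype.card α), f ((π ^ k) τ) = ∑ σ, f σ := by
  rw [← Fin.sum_univ_eq_sum_range (fun k => f ((π ^ k) τ))]
  exact Fintype.sum_bijective _ (hπ.bijective_pow_apply τ) _ _ fun _ => rfl

end IsFullCycle

section Walk

variable {d : ℕ}

theorem card_coin (d : ℕ) : Fintype.card (Coin d) = 2 * d := by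
  simp [mul_comm]

theorem sum_jump (d : ℕ) : ∑ σ : Coin d, jump d σ = 0 := by
  simp [Fintype.sum_prod_type, jump]

def bvBasis (d : ℕ) : HilbertBasis (Coin d × Site d) ℂ (WalkH d) :=
  HilbertBasis.ofRepr (LinearIsometryEquiv.refl ℂ (WalkH d))

theorem bvBasis_apply (p : Coin d × Site d) : bvBasis d p = bv d p.1 p.2 := by
  classical
  exact (HilbertBasis.repr_symm_single _ p).symm

theorem orthonormal_bv (d : ℕ) : Orthonormal ℂ fun p : Coin d × Site d => bv d p.1 p.2 := by
  have h : ⇑(bvBasis d) = fun p => bv d p.1 p.2 := funext bvBasis_apply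
  exact h ▸ (bvBasis d).orthonormal

theorem topologicalClosure_eq_top_of_forall_bv_mem {W : Submodule ℂ (WalkH d)}
    (hW : ∀ σ y, bv d σ y ∈ W) : W.topologicalClosure = ⊤ := by
  refine eq_top_iff.mpr <| (bvBasis d).dense_span.ge.trans <|
    Submodule.topologicalClosure_mono <| Submodule.span_le.mpr ?_
  rintro _ ⟨p, rfl⟩
  exact bvBasis_apply p ▸ hW p.1 p.2

def cycleVec (d : ℕ) (π : Equiv.Perm (Coin d)) (τ : Coin d) (x : Site d) (k : ℕ) : WalkH d :=
  bv d ((π ^ k) τ) (x + ∑ s ∈ range k, jump d ((π ^ (s + 1)) τ))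

variable {π : Equiv.Perm (Coin d)} {τ : Coin d}

theorem cycSubspace_eq_span_cycleVec (x : Site d) :
    cycSubspace d π τ x =
      Submodule.span ℂ (Set.range fun k : Fin (2 * d) => cycleVec d π τ x k) := by
  unfold cycSubspace
  congr 1
  ext v
  simp [cycleVec, Fin.exists_iff, eq_comm]

theorem cycleVec_two_mul (hπ : IsFullCycle π) (x : Site d) :
    cycleVec d π τ x (2 * d) = cycleVec d π τ x 0 := by
  have hsum : ∑ s ∈ range (2 * d), jump d ((π ^ (s + 1)) τ) = 0 := by
    simp only [pow_succ, Equiv.Perm.mul_apply, ← card_coin d, hπ.sum_range_pow_apply, sum_jump]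
  rw [cycleVec, cycleVec, hsum, add_zero, ← card_coin d, hπ.pow_card_apply]
  simp

theorem inner_cycleVec (hπ : IsFullCycle π) {x x' : Site d} {k m : ℕ} (hk : k < 2 * d)
    (hm : m < 2 * d) :
    ⟪cycleVec d π τ x k, cycleVec d π τ x' m⟫_ℂ = if x = x' ∧ k = m then 1 else 0 := by
  have h := orthonormal_iff_ite.mp (orthonormal_bv d)
    ((π ^ k) τ, x + ∑ s ∈ range k, jump d ((π ^ (s + 1)) τ))
    ((π ^ m) τ, x' + ∑ s ∈ range m, jump d ((π ^ (s + 1)) τ))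
  rw [← card_coin d] at hk hm
  simp only [cycleVec, h, Prod.mk.injEq, hπ.pow_apply_inj τ hk hm]
  by_cases hkm : k = m
  · subst hkm
    simp
  · simp [hkm]

theorem orthonormal_cycleVec (hπ : IsFullCycle π) (x : Site d) :
    Orthonormal ℂ fun k : Fin (2 * d) => cycleVec d π τ x k :=
  orthonormal_iff_ite.mpr fun k m => by simp [inner_cycleVec hπ k.isLt m.isLt, Fin.val_inj]

theorem cycSubspace_isOrtho (hπ : IsFullCycle π) {x x' : Site d} (hx : x ≠ x') :
    cycSubspace d π τ x ⟂ cycSubspace d π τ x' := by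
  rw [cycSubspace_eq_span_cycleVec, cycSubspace_eq_span_cycleVec, Submodule.isOrtho_span]
  rintro _ ⟨k, rfl⟩ _ ⟨m, rfl⟩
  rw [inner_cycleVec hπ k.isLt m.isLt, if_neg fun h => hx h.1]

theorem exists_bv_mem_cycSubspace (hπ : IsFullCycle π) (τ σ : Coin d) (y : Site d) :
    ∃ x, bv d σ y ∈ cycSubspace d π τ x := by
  obtain ⟨k, hk, rfl⟩ := hπ σ τ
  refine ⟨y - ∑ s ∈ range k, jump d ((π ^ (s + 1)) τ),
    Submodule.subset_span ⟨k, card_coin d ▸ hk, ?_⟩⟩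
  rw [sub_add_cancel]

variable {D U : WalkH d →L[ℂ] WalkH d}

theorem apply_bv_of_permCoin (hU : ∀ (σ : Coin d) (y : Site d),
      U (bv d σ y) = ∑ τ : Coin d, permCoin d π τ σ • bv d τ (y + jump d τ))
    (σ : Coin d) (y : Site d) : U (bv d σ y) = bv d (π σ) (y + jump d (π σ)) := by
  simp [hU, permCoin]

theorem exists_mul_apply_cycleVec
    (hD : ∀ (τ : Coin d) (x : Site d), ∃ θ : ℝ,
      D (bv d τ x) = Complex.exp (Complex.I * θ) • bv d τ x)
    (hU : ∀ (σ : Coin d) (y : Site d),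
      U (bv d σ y) = ∑ τ : Coin d, permCoin d π τ σ • bv d τ (y + jump d τ))
    (τ : Coin d) (x : Site d) (k : ℕ) :
    ∃ c : ℂ, ‖c‖ = 1 ∧ (D * U) (cycleVec d π τ x k) = c • cycleVec d π τ x (k + 1) := by
  obtain ⟨θ, hθ⟩ := hD ((π ^ (k + 1)) τ) (x + ∑ s ∈ range (k + 1), jump d ((π ^ (s + 1)) τ))
  refine ⟨Complex.exp (Complex.I * θ), by rw [mul_comm]; exact Complex.norm_exp_ofReal_mul_I θ, ?_⟩
  have hcoin : π ((π ^ k) τ) = (π ^ (k + 1)) τ := by rw [pow_succ', Equiv.Perm.mul_apply]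
  rw [mul_apply_eq_comp, cycleVec, apply_bv_of_permCoin hU, hcoin, add_assoc,
    ← sum_range_succ, hθ, cycleVec]

theorem exists_orthonormal_eigenbasis_cycSubspace (hd : 0 < d) (hπ : IsFullCycle π)
    (hD : ∀ (τ : Coin d) (x : Site d), ∃ θ : ℝ,
      D (bv d τ x) = Complex.exp (Complex.I * θ) • bv d τ x)
    (hU : ∀ (σ : Coin d) (y : Site d),
      U (bv d σ y) = ∑ τ : Coin d, permCoin d π τ σ • bv d τ (y + jump d τ))
    (τ : Coin d) (x : Site d) :
    ∃ f : Fin (2 * d) → WalkH d, Orthonormal ℂ f ∧ (∀ j, ∃ c : ℂ, (D * U) (f j) = c • f j) ∧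
      Submodule.span ℂ (Set.range f) = cycSubspace d π τ x := by
  choose a ha hT using exists_mul_apply_cycleVec hD hU τ x
  rw [cycSubspace_eq_span_cycleVec]
  exact exists_orthonormal_eigenbasis_of_weighted_cyclic_shift (D * U : WalkH d →L[ℂ] WalkH d)
    (by omega) (orthonormal_cycleVec hπ x) (cycleVec_two_mul hπ x) hT ha

end Walk

theorem fully_localized_walk_pure_point_general (d : ℕ) (hd : 1 ≤ d) (π : Equiv.Perm (Coin d))
    (hπ : ∀ σ τ : Coin d, ∃ k < 2 * d, (π ^ k) τ = σ)
    (D U : WalkH d →L[ℂ] WalkH d)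
    (hD : ∀ (τ : Coin d) (x : Site d), ∃ θ : ℝ,
      D (bv d τ x) = Complex.exp (Complex.I * θ) • bv d τ x)
    (hU : ∀ (σ : Coin d) (y : Site d),
      U (bv d σ y) = ∑ τ : Coin d, permCoin d π τ σ • bv d τ (y + jump d τ)) :
    (∃ Idx : Set (Coin d × Site d),
      (∀ p ∈ Idx, ∀ q ∈ Idx, p ≠ q →
        ∀ u ∈ cycSubspace d π p.1 p.2, ∀ w ∈ cycSubspace d π q.1 q.2, ⟪u, w⟫_ℂ = 0) ∧
      (⨆ p ∈ Idx, cycSubspace d π p.1 p.2).topologicalClosure = ⊤) ∧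
    ∃ b : (Coin d × Site d) → WalkH d,
      Orthonormal ℂ b ∧
      (∀ i, ∃ c : ℂ, (D * U) (b i) = c • b i) ∧
      (Submodule.span ℂ (Set.range b)).topologicalClosure = ⊤ := by
  have hπ' : IsFullCycle π := fun σ τ => card_coin d ▸ hπ σ τ
  set τ₀ : Coin d := (⟨0, hd⟩, true)
  choose f hf hfD hfspan using exists_orthonormal_eigenbasis_cycSubspace hd hπ' hD hU τ₀
  have hfmem : ∀ x j, f x j ∈ cycSubspace d π τ₀ x := fun x j =>
    hfspan x ▸ Submodule.subset_span ⟨j, rfl⟩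
  set e := Fintype.equivFinOfCardEq (card_coin d)
  refine ⟨⟨{p | p.1 = τ₀}, ?_, ?_⟩, fun p => f p.2 (e p.1), ?_, fun p => hfD p.2 (e p.1), ?_⟩
  · rintro ⟨_, x⟩ rfl ⟨_, x'⟩ rfl hne u hu w hw
    exact (cycSubspace_isOrtho hπ' fun h : x = x' => hne (by rw [h])).inner_eq hu hw
  · refine topologicalClosure_eq_top_of_forall_bv_mem fun σ y => ?_
    obtain ⟨x, hx⟩ := exists_bv_mem_cycSubspace hπ' τ₀ σ y
    exact (le_iSup₂ (f := fun p (_ : p ∈ {p : Coin d × Site d | p.1 = τ₀}) =>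
      cycSubspace d π p.1 p.2) (τ₀, x) rfl) hx
  · exact (orthonormal_uncurry_of_pairwise_isOrtho (fun _ _ hx => cycSubspace_isOrtho hπ' hx)
      hf hfmem).comp (fun p => (p.2, e p.1)) fun p q h =>
        Prod.ext (e.injective (Prod.ext_iff.mp h).2) (Prod.ext_iff.mp h).1
  · refine topologicalClosure_eq_top_of_forall_bv_mem fun σ y => ?_
    obtain ⟨x, hx⟩ := exists_bv_mem_cycSubspace hπ' τ₀ σ y
    rw [← hfspan] at hx
    refine Submodule.span_mono ?_ hx
    rintro _ ⟨j, rfl⟩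
    exact ⟨(e.symm j, x), by simp⟩

/-- if π is a 2d-cycle, then H is the orthogonal direct sum of the
invariant subspaces H^τ_x over a suitable index set; consequently U_D(C_π) is
pure point: H has an orthonormal basis of eigenvectors of U_D(C_π). -/
theorem fully_localized_walk_pure_point (d : ℕ) (hd : 1 ≤ d) (π : Equiv.Perm (Coin d))
    (hπ : ∀ σ τ : Coin d, ∃ k < 2 * d, (π ^ k) τ = σ)
    (D U : WalkH d →L[ℂ] WalkH d)
    (hDu : D ∈ unitary (WalkH d →L[ℂ] WalkH d))
    (hUu : U ∈ unitary (WalkH d →L[ℂ] WalkH d))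
    (hD : ∀ (τ : Coin d) (x : Site d), ∃ θ : ℝ,
      D (bv d τ x) = Complex.exp (Complex.I * θ) • bv d τ x)
    (hU : ∀ (σ : Coin d) (y : Site d),
      U (bv d σ y) = ∑ τ : Coin d, permCoin d π τ σ • bv d τ (y + jump d τ)) :
    (∃ Idx : Set (Coin d × Site d),
      (∀ p ∈ Idx, ∀ q ∈ Idx, p ≠ q →
        ∀ u ∈ cycSubspace d π p.1 p.2, ∀ w ∈ cycSubspace d π q.1 q.2, ⟪u, w⟫_ℂ = 0) ∧
      (⨆ p ∈ Idx, cycSubspace d π p.1 p.2).topologicalClosure = ⊤) ∧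
    ∃ b : (Coin d × Site d) → WalkH d,
      Orthonormal ℂ b ∧
      (∀ i, ∃ c : ℂ, (D * U) (b i) = c • b i) ∧
      (Submodule.span ℂ (Set.range b)).topologicalClosure = ⊤ :=
  fully_localized_walk_pure_point_general d hd π hπ D U hD hU
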